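/- For each of the nine distinguished generators (x,y), the cyclic left submodule R(x,y) of R² is free, i.e., the map α ↦ (αx, αy) from R to R² is injective; equivalently, each of the nine submodules R(x,y) has exactly 16 elements. -/

import Mathlib

open Matrix

/-- The matrix m(a,b,c,d) = [[a,c,d],[0,b,0],[0,0,b]] over GF(2). -/
def m (a b c d : ZMod 2) : Matrix (Fin 3) (Fin 3) (ZMod 2) :=
  !![a, c, d; 0, b, 0; 0, 0, b]

lemma m_mul (a b c d a' b' c' d' : ZMod 2) :
    m a b c d * m a' b' c' d' =
      m (a * a') (b * b') (a * c' + c * b') (a * d' + d * b') := by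
  ext i j
  fin_cases i <;> fin_cases j <;>
    simp [m, Matrix.mul_apply, Fin.sum_univ_three, Matrix.vecHead, Matrix.vecTail]

/-- The ring R, as a subring of the 3×3 matrices over GF(2). -/
def Rring : Subring (Matrix (Fin 3) (Fin 3) (ZMod 2)) where
  carrier := {A | ∃ a b c d : ZMod 2, A = m a b c d}
  zero_mem' := ⟨0, 0, 0, 0, by ext i j; fin_cases i <;> fin_cases j <;> simp [m, Matrix.vecHead, Matrix.vecTail]⟩
  one_mem' := ⟨1, 1, 0, 0, by ext i j; fin_cases i <;> fin_cases j <;> simp [m, Matrix.one_apply, Matrix.vecHead, Matrix.vecTail]⟩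
  add_mem' := by
    rintro A B ⟨a, b, c, d, rfl⟩ ⟨a', b', c', d', rfl⟩
    exact ⟨a + a', b + b', c + c', d + d',
      by ext i j; fin_cases i <;> fin_cases j <;> simp [m, Matrix.vecHead, Matrix.vecTail]⟩
  neg_mem' := by
    rintro A ⟨a, b, c, d, rfl⟩
    exact ⟨-a, -b, -c, -d,
      by ext i j; fin_cases i <;> fin_cases j <;> simp [m, Matrix.vecHead, Matrix.vecTail]⟩
  mul_mem' := by
    rintro A B ⟨a, b, c, d, rfl⟩ ⟨a', b', c', d', rfl⟩
    exact ⟨a * a', b * b', a * c' + c * b', a * d' + d * b', m_mul a b c d a' b' c' d'⟩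

lemma m_mem (a b c d : ZMod 2) : m a b c d ∈ Rring := ⟨a, b, c, d, rfl⟩

/-- The element m(a,b,c,d) viewed as an element of the ring R. -/
def mm (a b c d : ZMod 2) : Rring := ⟨m a b c d, m_mem a b c d⟩

/-- The cyclic left submodule R(x,y) = {(αx, αy) : α ∈ R} of R², as a set of vectors. -/
def RM (x y : Rring) : Set (Rring × Rring) := {p | ∃ α : Rring, p = (α * x, α * y)}

def t : Rring := mm 0 0 1 0
def f : Rring := mm 0 0 1 1
def s : Rring := mm 0 0 0 1
def e : Rring := mm 0 1 0 0
def u : Rring := mm 0 1 1 0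
def v : Rring := mm 0 1 1 1
def w : Rring := mm 0 1 0 1

/-- The nine distinguished generators. -/
def gens : List (Rring × Rring) :=
  [(t, e), (f, e), (s, e), (e, u), (e, v), (e, w), (e, s), (e, f), (e, t)]

/-! The map α ↦ (αx, αy) is additive, so it is injective as soon as no nonzero α kills both
x and y. Each distinguished pair is (e, y) or (y, e) where y = m(a,b,c,d) has (a,c,d) ≠ 0.
Since m(a,b,c,d)·e = m(0,b,c,d), the left annihilator of e consists of the m(a,0,0,0), and
m(a,0,0,0)·y = 0 forces a = 0. Injectivity then makes R(x,y) a bijective image of R,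
which has 2⁴ = 16 elements. -/

open Function

theorem injective_mul_pair_iff {S : Type*} [NonUnitalNonAssocRing S] (x y : S) :
    Injective (fun α : S => (α * x, α * y)) ↔ ∀ α : S, α * x = 0 → α * y = 0 → α = 0 := by
  change Injective ((AddMonoidHom.mulRight x).prod (AddMonoidHom.mulRight y)) ↔ _
  rw [injective_iff_map_eq_zero]
  simp only [AddMonoidHom.prod_apply, AddMonoidHom.coe_mulRight, Prod.mk_eq_zero, and_imp]

theorem injective_mul_pair_comm {S : Type*} [NonUnitalNonAssocRing S] {x y : S}
    (h : Injective (fun α : S => (α * x, α * y))) : Injective (fun α : S => (α * y, α * x)) := by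
  rw [injective_mul_pair_iff] at h ⊢
  exact fun α hy hx => h α hx hy

theorem mm_mul (a b c d a' b' c' d' : ZMod 2) :
    mm a b c d * mm a' b' c' d' =
      mm (a * a') (b * b') (a * c' + c * b') (a * d' + d * b') :=
  Subtype.ext (m_mul a b c d a' b' c' d')

theorem mm_inj {a b c d a' b' c' d' : ZMod 2} :
    mm a b c d = mm a' b' c' d' ↔ a = a' ∧ b = b' ∧ c = c' ∧ d = d' := by
  refine ⟨fun h => ?_, fun ⟨ha, hb, hc, hd⟩ => ha ▸ hb ▸ hc ▸ hd ▸ rfl⟩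
  have entry (i j : Fin 3) : m a b c d i j = m a' b' c' d' i j :=
    congrFun (congrFun (congrArg Subtype.val h) i) j
  exact ⟨entry 0 0, entry 1 1, entry 0 1, entry 0 2⟩

theorem zero_eq_mm : (0 : Rring) = mm 0 0 0 0 := by
  ext i j
  fin_cases i <;> fin_cases j <;> rfl

theorem mm_eq_zero_iff {a b c d : ZMod 2} :
    mm a b c d = 0 ↔ a = 0 ∧ b = 0 ∧ c = 0 ∧ d = 0 := by
  rw [zero_eq_mm, mm_inj]

theorem exists_eq_mm (α : Rring) : ∃ a b c d : ZMod 2, α = mm a b c d := by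
  obtain ⟨A, a, b, c, d, rfl⟩ := α
  exact ⟨a, b, c, d, rfl⟩

theorem nat_card_Rring : Nat.card Rring = 16 := by
  have hbij : Bijective fun p : ZMod 2 × ZMod 2 × ZMod 2 × ZMod 2 =>
      mm p.1 p.2.1 p.2.2.1 p.2.2.2 := by
    refine ⟨fun p q h => ?_, fun α => ?_⟩
    · obtain ⟨h1, h2, h3, h4⟩ := mm_inj.mp h
      exact Prod.ext h1 (Prod.ext h2 (Prod.ext h3 h4))
    · obtain ⟨a, b, c, d, rfl⟩ := exists_eq_mm α
      exact ⟨(a, b, c, d), rfl⟩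
  rw [← Nat.card_eq_of_bijective _ hbij]
  simp only [Nat.card_prod, Nat.card_zmod]

theorem RM_ncard_of_injective {x y : Rring} (h : Injective (fun α : Rring => (α * x, α * y))) :
    (RM x y).ncard = 16 := by
  have hRM : RM x y = Set.range (fun α : Rring => (α * x, α * y)) := by
    ext p
    exact exists_congr fun α => eq_comm
  rw [hRM, Set.ncard_range_of_injective h, nat_card_Rring]

theorem mm_mul_e (a b c d : ZMod 2) : mm a b c d * e = mm 0 b c d := by
  rw [e, mm_mul]
  congr 1 <;> ring

theorem injective_mul_e_mm {a b c d : ZMod 2} (h : a ≠ 0 ∨ c ≠ 0 ∨ d ≠ 0) :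
    Injective (fun α : Rring => (α * e, α * mm a b c d)) := by
  rw [injective_mul_pair_iff]
  intro α hαe hαy
  obtain ⟨a', b', c', d', rfl⟩ := exists_eq_mm α
  obtain ⟨-, rfl, rfl, rfl⟩ := mm_eq_zero_iff.mp ((mm_mul_e _ _ _ _).symm.trans hαe)
  rw [mm_mul, mm_eq_zero_iff] at hαy
  simp only [zero_mul, add_zero, mul_eq_zero] at hαy
  refine mm_eq_zero_iff.mpr ⟨?_, rfl, rfl, rfl⟩
  tauto

/-- For each of the nine distinguished generators (x,y), the cyclic left submodule
R(x,y) is free (the map α ↦ (αx, αy) is injective); equivalently, it has 16 elements. -/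
theorem nine_submodules_free :
    ∀ g ∈ gens, Function.Injective (fun α : Rring => (α * g.1, α * g.2)) ∧
      (RM g.1 g.2).ncard = 16 := by
  have free : ∀ g ∈ gens, Injective (fun α : Rring => (α * g.1, α * g.2)) := by
    intro g hg
    fin_cases hg
    all_goals first
      | exact injective_mul_e_mm (by decide)
      | exact injective_mul_pair_comm (injective_mul_e_mm (by decide))
  exact fun g hg => ⟨free g hg, RM_ncard_of_injective (free g hg)⟩
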